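/- arXiv:2302.06730 — 5 statements merged into one kernel-verified Lean document; each statement's English description precedes it below -/
import Mathlib

section
/- Let S, β, c be positive real numbers. The function f(A, B) = S·β / (B · log₂(1 + c·2^{−A})) is convex on the convex set {(A, B) ∈ ℝ² : B > 0}, where log₂ denotes the base-2 logarithm. (Note that 1 + c·2^{−A} > 1 for every real A, so the denominator is positive on this set.) -/
/-!
Writing `L(A) = log (1 + c·2^(-A))`, the function equals `S·β·log 2 · exp (-log L(A) - log B)`,
so it suffices that `-log L` is convex, since `-log B` is convex and `exp` of a convex function
is convex. After the affine substitution `y = log c - A·log 2` this is the convexity of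
`y ↦ -log (log (1 + e^y))`, whose second derivative
`e^y (e^y - log (1 + e^y)) / ((1 + e^y)² log² (1 + e^y))` is nonnegative because
`log (1 + t) ≤ t`.
-/

open Real Set

lemma log_one_add_exp_pos (y : ℝ) : 0 < log (1 + exp y) :=
  log_pos (by linarith [exp_pos y])

lemma hasDerivAt_log_one_add_exp (y : ℝ) :
    HasDerivAt (fun y => log (1 + exp y)) (exp y / (1 + exp y)) y :=
  ((hasDerivAt_exp y).const_add 1).log (by positivity : (0 : ℝ) < 1 + exp y).ne'

lemma convexOn_neg_log_log_one_add_exp :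
    ConvexOn ℝ univ fun y => -log (log (1 + exp y)) := by
  have hderiv (y : ℝ) : HasDerivAt (fun y => -log (log (1 + exp y)))
      (-(exp y / (1 + exp y) / log (1 + exp y))) y :=
    ((hasDerivAt_log_one_add_exp y).log (log_one_add_exp_pos y).ne').neg
  have hderiv2 (y : ℝ) : HasDerivAt (fun y => -(exp y / (1 + exp y) / log (1 + exp y)))
      (exp y * (exp y - log (1 + exp y)) / ((1 + exp y) ^ 2 * log (1 + exp y) ^ 2)) y := by
    have hσ : HasDerivAt (fun y => exp y / (1 + exp y))
        ((exp y * (1 + exp y) - exp y * exp y) / (1 + exp y) ^ 2) y :=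
      (hasDerivAt_exp y).div ((hasDerivAt_exp y).const_add 1) (by positivity)
    refine (hσ.div (hasDerivAt_log_one_add_exp y) (log_one_add_exp_pos y).ne').neg.congr_deriv ?_
    have := (log_one_add_exp_pos y).ne'
    field_simp
    ring
  refine convexOn_of_hasDerivWithinAt2_nonneg convex_univ
    (fun y _ => (hderiv y).continuousAt.continuousWithinAt)
    (fun y _ => (hderiv y).hasDerivWithinAt) (fun y _ => (hderiv2 y).hasDerivWithinAt)
    (fun y _ => ?_)
  have hlog_le : 0 ≤ exp y - log (1 + exp y) := by
    linarith [log_le_sub_one_of_pos (by positivity : 0 < 1 + exp y)]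
  have := exp_pos y
  positivity

lemma convexOn_neg_log_log_one_add_mul_rpow {b c : ℝ} (hb : 0 < b) (hc : 0 < c) :
    ConvexOn ℝ univ fun x : ℝ => -log (log (1 + c * b ^ x)) := by
  let g : ℝ →ᵃ[ℝ] ℝ := (LinearMap.mul ℝ ℝ (log b)).toAffineMap + AffineMap.const ℝ ℝ (log c)
  refine (convexOn_neg_log_log_one_add_exp.comp_affineMap g).congr fun x _ => ?_
  show -log (log (1 + exp (log b * x + log c))) = _
  rw [exp_add, exp_log hc, rpow_def_of_pos hb, mul_comm]

theorem ConvexOn.exp {E : Type*} [AddCommMonoid E] [SMul ℝ E] {s : Set E} {f : E → ℝ}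
    (hf : ConvexOn ℝ s f) : ConvexOn ℝ s fun x => exp (f x) :=
  ⟨hf.1, fun _ hx _ hy _ _ ha hb hab => (exp_le_exp.2 (hf.2 hx hy ha hb hab)).trans
    (convexOn_exp.2 (mem_univ _) (mem_univ _) ha hb hab)⟩

/-- Lemma 2 (first half): the function `f(A, B) = S·β / (B · log₂(1 + c·2^(−A)))`
is convex on `{(A, B) : B > 0}`. -/
theorem stmt_2 (S β c : ℝ) (hS : 0 < S) (hβ : 0 < β) (hc : 0 < c) :
    ConvexOn ℝ {p : ℝ × ℝ | 0 < p.2}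
      (fun p : ℝ × ℝ => S * β / (p.2 * Real.logb 2 (1 + c * (2 : ℝ) ^ (-p.1)))) := by
  have hneg_log_snd : ConvexOn ℝ {p : ℝ × ℝ | 0 < p.2} fun p => -log p.2 :=
    (neg_convexOn_iff.2 strictConcaveOn_log_Ioi.concaveOn).comp_linearMap (LinearMap.snd ℝ ℝ ℝ)
  have hneg_log_log_fst : ConvexOn ℝ {p : ℝ × ℝ | 0 < p.2}
      fun p => -log (log (1 + c * (2⁻¹ : ℝ) ^ p.1)) :=
    ((convexOn_neg_log_log_one_add_mul_rpow (by norm_num) hc).comp_linearMap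
      (LinearMap.fst ℝ ℝ ℝ)).subset (subset_univ _) hneg_log_snd.1
  refine ((hneg_log_log_fst.add hneg_log_snd).exp.smul
    (by positivity : 0 ≤ S * β * log 2)).congr fun p (hp : 0 < p.2) => ?_
  have hL : 0 < log (1 + c * (2 : ℝ) ^ (-p.1)) :=
    log_pos (lt_add_of_pos_right 1 (mul_pos hc (rpow_pos_of_pos two_pos _)))
  have hlog2 : 0 < log 2 := log_pos one_lt_two
  simp only [Pi.add_apply, smul_eq_mul, exp_add, exp_neg, inv_rpow zero_le_two,
    ← rpow_neg zero_le_two, exp_log hL, exp_log hp, logb]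
  field_simp
end

section
/- Let S, β, c be positive real numbers and define f(A, B) = S·β / (B · log₂(1 + c·2^{−A})) for B > 0, where log₂ is the base-2 logarithm. For every A ∈ ℝ and B > 0, writing r = c·2^{−A}, the Hessian determinant of f satisfies (∂²f/∂A²)(A,B) · (∂²f/∂B²)(A,B) − ((∂²f/∂A∂B)(A,B))² = (Sβ)² · r·(3r − 2·ln(1+r)) / ((1+r)² · B⁴ · (log₂(1+r))⁴), and this quantity is nonnegative. Here ∂²f/∂A² denotes the second derivative of a ↦ f(a,B) at A, ∂²f/∂B² the second derivative of b ↦ f(A,b) at B, and ∂²f/∂A∂B the derivative in A of the derivative of f in B. -/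
/-- Equation (51) of the paper: Hessian-determinant computation for
`f(A,B) = S·β / (B · log₂(1 + c·2^(−A)))`, and its nonnegativity.  With
`r = c·2^(−A)`, the Hessian determinant equals
`(Sβ)² · r·(3r − 2·ln(1+r)) / ((1+r)² · B⁴ · (log₂(1+r))⁴) ≥ 0`. -/
theorem stmt_3 (S β c : ℝ) (hS : 0 < S) (hβ : 0 < β) (hc : 0 < c)
    (f : ℝ → ℝ → ℝ)
    (hf : ∀ A B : ℝ, f A B = S * β / (B * Real.logb 2 (1 + c * (2 : ℝ) ^ (-A)))) :
    ∀ A B r : ℝ, 0 < B → r = c * (2 : ℝ) ^ (-A) →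
      (deriv (deriv (fun a => f a B)) A * deriv (deriv (fun b => f A b)) B -
          (deriv (fun a => deriv (fun b => f a b) B) A) ^ 2 =
        (S * β) ^ 2 * (r * (3 * r - 2 * Real.log (1 + r))) /
          ((1 + r) ^ 2 * B ^ 4 * Real.logb 2 (1 + r) ^ 4)) ∧
      0 ≤ (S * β) ^ 2 * (r * (3 * r - 2 * Real.log (1 + r))) /
          ((1 + r) ^ 2 * B ^ 4 * Real.logb 2 (1 + r) ^ 4) := by
  intro A B r hB hr
  have l2pos : 0 < Real.log 2 := Real.log_pos one_lt_two
  have l2ne : Real.log 2 ≠ 0 := ne_of_gt l2pos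
  have hBne : B ≠ 0 := ne_of_gt hB
  have hra : ∀ a : ℝ, 0 < c * (2:ℝ) ^ (-a) :=
    fun a => mul_pos hc (Real.rpow_pos_of_pos two_pos _)
  have h1ra : ∀ a : ℝ, 0 < 1 + c * (2:ℝ) ^ (-a) := fun a => by linarith [hra a]
  have hLpos : ∀ a : ℝ, 0 < Real.log (1 + c * (2:ℝ) ^ (-a)) :=
    fun a => Real.log_pos (by linarith [hra a])
  -- derivative of a ↦ c * 2^(-a)
  have hR : ∀ a : ℝ, HasDerivAt (fun x : ℝ => c * (2:ℝ) ^ (-x))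
      (-(Real.log 2) * (c * (2:ℝ) ^ (-a))) a := by
    intro a
    have hexp : ∀ x : ℝ, c * (2:ℝ) ^ (-x) = c * Real.exp (-(Real.log 2) * x) := by
      intro x
      rw [Real.rpow_def_of_pos two_pos]
      ring_nf
    have h : HasDerivAt (fun x : ℝ => c * Real.exp (-(Real.log 2) * x))
        (c * (Real.exp (-(Real.log 2) * a) * (-(Real.log 2)))) a := by
      have h1 : HasDerivAt (fun x : ℝ => -(Real.log 2) * x) (-(Real.log 2)) a := by
        simpa using (hasDerivAt_id a).const_mul (-(Real.log 2))
      exact (h1.exp).const_mul c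
    have hfun : (fun x : ℝ => c * (2:ℝ) ^ (-x)) = fun x => c * Real.exp (-(Real.log 2) * x) :=
      funext hexp
    rw [hfun, hexp a]
    convert h using 1
    ring
  -- derivative of L a = log (1 + c*2^(-a))
  have hLd : ∀ a : ℝ, HasDerivAt (fun x : ℝ => Real.log (1 + c * (2:ℝ) ^ (-x)))
      ((-(Real.log 2) * (c * (2:ℝ) ^ (-a))) / (1 + c * (2:ℝ) ^ (-a))) a :=
    fun a => ((hR a).const_add 1).log (ne_of_gt (h1ra a))
  set K := S * β with hK
  -- section in a
  have hfA : (fun a => f a B) =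
      fun a => (K * Real.log 2 / B) * (Real.log (1 + c * (2:ℝ) ^ (-a)))⁻¹ := by
    funext a
    rw [hf, Real.logb]
    field_simp
  have hD1 : ∀ a : ℝ, HasDerivAt (fun a => f a B)
      ((K * Real.log 2 / B) *
        (-((-(Real.log 2) * (c * (2:ℝ) ^ (-a))) / (1 + c * (2:ℝ) ^ (-a))) /
          (Real.log (1 + c * (2:ℝ) ^ (-a))) ^ 2)) a := by
    intro a
    rw [hfA]
    exact ((hLd a).inv (ne_of_gt (hLpos a))).const_mul _
  have deriv1 : deriv (fun a => f a B) =
      fun a => K * (Real.log 2) ^ 2 * (c * (2:ℝ) ^ (-a)) /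
        (B * (1 + c * (2:ℝ) ^ (-a)) * (Real.log (1 + c * (2:ℝ) ^ (-a))) ^ 2) := by
    funext a
    rw [(hD1 a).deriv]
    have h1 := ne_of_gt (h1ra a); have h2 := ne_of_gt (hLpos a)
    field_simp
  -- second derivative in a
  have hn : HasDerivAt (fun a : ℝ => K * (Real.log 2) ^ 2 * (c * (2:ℝ) ^ (-a)))
      ((K * (Real.log 2) ^ 2) * (-(Real.log 2) * (c * (2:ℝ) ^ (-A)))) A :=
    (hR A).const_mul _
  have hd : HasDerivAt (fun a : ℝ =>
      B * (1 + c * (2:ℝ) ^ (-a)) * (Real.log (1 + c * (2:ℝ) ^ (-a))) ^ 2)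
      ((B * (-(Real.log 2) * (c * (2:ℝ) ^ (-A)))) * (Real.log (1 + c * (2:ℝ) ^ (-A))) ^ 2 +
        (B * (1 + c * (2:ℝ) ^ (-A))) *
          (2 * (Real.log (1 + c * (2:ℝ) ^ (-A))) ^ 1 *
            ((-(Real.log 2) * (c * (2:ℝ) ^ (-A))) / (1 + c * (2:ℝ) ^ (-A))))) A := by
    exact (((hR A).const_add 1).const_mul B).mul ((hLd A).pow 2)
  have hdne : B * (1 + c * (2:ℝ) ^ (-A)) * (Real.log (1 + c * (2:ℝ) ^ (-A))) ^ 2 ≠ 0 :=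
    ne_of_gt (mul_pos (mul_pos hB (h1ra A)) (pow_pos (hLpos A) 2))
  have hdiv := hn.div hd hdne
  have d2A : deriv (deriv (fun a => f a B)) A =
      (K * Real.log 2 ^ 2 * (-Real.log 2 * (c * (2:ℝ) ^ (-A))) *
          (B * (1 + c * (2:ℝ) ^ (-A)) * Real.log (1 + c * (2:ℝ) ^ (-A)) ^ 2) -
        K * Real.log 2 ^ 2 * (c * (2:ℝ) ^ (-A)) *
          (B * (-Real.log 2 * (c * (2:ℝ) ^ (-A))) * Real.log (1 + c * (2:ℝ) ^ (-A)) ^ 2 +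
            B * (1 + c * (2:ℝ) ^ (-A)) *
              (2 * Real.log (1 + c * (2:ℝ) ^ (-A)) ^ 1 *
                (-Real.log 2 * (c * (2:ℝ) ^ (-A)) / (1 + c * (2:ℝ) ^ (-A)))))) /
      (B * (1 + c * (2:ℝ) ^ (-A)) * Real.log (1 + c * (2:ℝ) ^ (-A)) ^ 2) ^ 2 := by
    rw [deriv1]; exact hdiv.deriv
  -- section in b
  have hfB : ∀ a : ℝ, (fun b => f a b) =
      fun b => (K * Real.log 2 / Real.log (1 + c * (2:ℝ) ^ (-a))) * b⁻¹ := by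
    intro a
    funext b
    rw [hf, Real.logb]
    rcases eq_or_ne b 0 with h | h
    · simp [h]
    · field_simp
  have hDB : ∀ a b : ℝ, b ≠ 0 → HasDerivAt (fun b => f a b)
      ((K * Real.log 2 / Real.log (1 + c * (2:ℝ) ^ (-a))) * (-(b ^ 2)⁻¹)) b := by
    intro a b hb
    rw [hfB a]
    exact (hasDerivAt_inv hb).const_mul _
  have hev : (deriv fun b => f A b) =ᶠ[nhds B]
      fun b => (K * Real.log 2 / Real.log (1 + c * (2:ℝ) ^ (-A))) * (-(b ^ 2)⁻¹) := by
    filter_upwards [eventually_ne_nhds hBne] with b hb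
    exact (hDB A b hb).deriv
  have hDB2 : HasDerivAt
      (fun b : ℝ => (K * Real.log 2 / Real.log (1 + c * (2:ℝ) ^ (-A))) * (-(b ^ 2)⁻¹))
      ((K * Real.log 2 / Real.log (1 + c * (2:ℝ) ^ (-A))) *
        (-(-(2 * B ^ 1) / (B ^ 2) ^ 2))) B := by
    exact (((hasDerivAt_pow 2 B).inv (pow_ne_zero 2 hBne)).neg).const_mul _
  have d2B : deriv (deriv fun b => f A b) B =
      (K * Real.log 2 / Real.log (1 + c * (2:ℝ) ^ (-A))) * (-(-(2 * B ^ 1) / (B ^ 2) ^ 2)) := by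
    rw [hev.deriv_eq]
    exact hDB2.deriv
  -- mixed
  have hmix1 : (fun a => deriv (fun b => f a b) B) =
      fun a => (K * Real.log 2 * (-(B ^ 2)⁻¹)) * (Real.log (1 + c * (2:ℝ) ^ (-a)))⁻¹ := by
    funext a
    rw [(hDB a B hBne).deriv]
    ring
  have hmixd : HasDerivAt
      (fun a => (K * Real.log 2 * (-(B ^ 2)⁻¹)) * (Real.log (1 + c * (2:ℝ) ^ (-a)))⁻¹)
      ((K * Real.log 2 * (-(B ^ 2)⁻¹)) *
        (-((-(Real.log 2) * (c * (2:ℝ) ^ (-A))) / (1 + c * (2:ℝ) ^ (-A))) /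
          (Real.log (1 + c * (2:ℝ) ^ (-A))) ^ 2)) A :=
    ((hLd A).inv (ne_of_gt (hLpos A))).const_mul _
  have dmix : deriv (fun a => deriv (fun b => f a b) B) A =
      (K * Real.log 2 * (-(B ^ 2)⁻¹)) *
        (-((-(Real.log 2) * (c * (2:ℝ) ^ (-A))) / (1 + c * (2:ℝ) ^ (-A))) /
          (Real.log (1 + c * (2:ℝ) ^ (-A))) ^ 2) := by
    rw [hmix1]; exact hmixd.deriv
  -- final computation
  rw [d2A, d2B, dmix, Real.logb]
  subst hr
  have h1 := ne_of_gt (h1ra A)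
  have h2 := ne_of_gt (hLpos A)
  have h3 := ne_of_gt (hra A)
  constructor
  · field_simp
    ring
  · apply div_nonneg
    · apply mul_nonneg (sq_nonneg _)
      apply mul_nonneg (le_of_lt (hra A))
      have := Real.log_le_sub_one_of_pos (h1ra A)
      nlinarith [hra A]
    · positivity
end

section
/- Let C > 0 and N₀ > 0 be real constants and define f(A, B) = C / (B·(A − log₂(N₀·B))) on the set of (A,B) with B > 0 and A > log₂(N₀·B), where log₂ is the base-2 logarithm. At every such point, writing s = A − log₂(N₀·B), the Hessian determinant of f satisfies (∂²f/∂A²)(A,B)·(∂²f/∂B²)(A,B) − ((∂²f/∂A∂B)(A,B))² = C²·(3s − 2/ln 2) / (B⁴·s⁵), and (∂²f/∂A²)(A,B) = 2C/(B·s³) > 0. Consequently, at every point with B > 0 and A − log₂(N₀·B) ≥ 2/(3·ln 2), the 2×2 Hessian matrix of f is positive semidefinite. Here ∂²f/∂A² denotes the second derivative of a ↦ f(a,B) at A, ∂²f/∂B² the second derivative of b ↦ f(A,b) at B, and ∂²f/∂A∂B the derivative in A of the derivative of f in B. -/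
/-!
With `s = A - log₂(N₀ B)` one has `∂s/∂A = 1` and `∂s/∂B = -1/(B ln 2)`, so every second partial
derivative of `C / (B s)` is a rational function of `B` and `s`:
`f_AA = 2C/(B s³)`, `f_AB = C (s - 2/ln 2)/(B² s³)`, `f_BB = C (s/ln 2 + 2 (s - 1/ln 2)²)/(B³ s³)`.
The determinant identity is then algebra, and a symmetric `2 × 2` matrix with positive corner entry
and nonnegative determinant is positive semidefinite by completing the square.
-/

open Real Filter Topology Matrix

theorem Matrix.posSemidef_fin_two_of_pos_of_det_nonneg {p q r : ℝ} (hp : 0 < p)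
    (hdet : 0 ≤ p * r - q ^ 2) : Matrix.PosSemidef !![p, q; q, r] := by
  refine Matrix.PosSemidef.of_dotProduct_mulVec_nonneg ?_ fun x => ?_
  · ext i j
    fin_cases i <;> fin_cases j <;> rfl
  · have hform : star x ⬝ᵥ (!![p, q; q, r] *ᵥ x) =
        p * x 0 ^ 2 + 2 * q * x 0 * x 1 + r * x 1 ^ 2 := by
      simp only [dotProduct, Pi.star_apply, star_trivial, mulVec, of_apply, cons_val',
        cons_val_fin_one, Fin.sum_univ_two, cons_val_zero, cons_val_one]
      ring
    -- `p · (form) = (p x₀ + q x₁)² + (p r - q²) x₁²`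
    rw [hform]
    nlinarith [sq_nonneg (p * x 0 + q * x 1), mul_nonneg hdet (sq_nonneg (x 1))]

section

variable (C : ℝ) {B L x : ℝ}

theorem hasDerivAt_div_mul_sub (hB : B ≠ 0) (hx : x ≠ L) :
    HasDerivAt (fun a => C / (B * (a - L))) (-C / (B * (x - L) ^ 2)) x := by
  have hxL : x - L ≠ 0 := sub_ne_zero.2 hx
  refine ((hasDerivAt_const x C).fun_div (((hasDerivAt_id' x).sub_const L).const_mul B)
    (mul_ne_zero hB hxL)).congr_deriv ?_
  field_simp
  ring

theorem deriv_deriv_div_mul_sub (hB : B ≠ 0) (hx : x ≠ L) :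
    deriv (deriv fun a => C / (B * (a - L))) x = 2 * C / (B * (x - L) ^ 3) := by
  have hxL : x - L ≠ 0 := sub_ne_zero.2 hx
  have hfirst : deriv (fun a => C / (B * (a - L))) =ᶠ[𝓝 x] fun a => -C / (B * (a - L) ^ 2) :=
    (eventually_ne_nhds hx).mono fun a ha => (hasDerivAt_div_mul_sub C hB ha).deriv
  have h := (hasDerivAt_const x (-C)).fun_div
    ((((hasDerivAt_id' x).sub_const L).fun_pow 2).const_mul B) (mul_ne_zero hB (pow_ne_zero 2 hxL))
  refine (h.congr_of_eventuallyEq hfirst).deriv.trans ?_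
  field_simp
  ring

end

theorem hasDerivAt_logb_const_mul (β : ℝ) {c x : ℝ} (hc : c ≠ 0) (hx : x ≠ 0) :
    HasDerivAt (fun y => logb β (c * y)) (x⁻¹ / log β) x := by
  have h := (((hasDerivAt_id' x).const_mul c).log (mul_ne_zero hc hx)).div_const (log β)
  exact h.congr_deriv (by field_simp)

section

variable (C a β : ℝ) {N₀ b : ℝ}

theorem hasDerivAt_mul_sub_logb (hN₀ : N₀ ≠ 0) (hb : b ≠ 0) :
    HasDerivAt (fun y => y * (a - logb β (N₀ * y))) (a - logb β (N₀ * b) - (log β)⁻¹) b := by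
  refine ((hasDerivAt_id' b).mul ((hasDerivAt_logb_const_mul β hN₀ hb).const_sub a)).congr_deriv ?_
  field_simp
  ring

theorem hasDerivAt_div_mul_sub_logb (hN₀ : N₀ ≠ 0) (hb : b ≠ 0) (hs : a - logb β (N₀ * b) ≠ 0) :
    HasDerivAt (fun y => C / (y * (a - logb β (N₀ * y))))
      (-C * (a - logb β (N₀ * b) - (log β)⁻¹) / (b * (a - logb β (N₀ * b))) ^ 2) b := by
  refine ((hasDerivAt_const b C).fun_div (hasDerivAt_mul_sub_logb a β hN₀ hb)
    (mul_ne_zero hb hs)).congr_deriv ?_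
  ring

theorem deriv_deriv_div_mul_sub_logb (hN₀ : N₀ ≠ 0) (hb : b ≠ 0) (hs : a - logb β (N₀ * b) ≠ 0) :
    deriv (deriv fun y => C / (y * (a - logb β (N₀ * y)))) b =
      C * ((a - logb β (N₀ * b)) / log β + 2 * (a - logb β (N₀ * b) - (log β)⁻¹) ^ 2) /
        (b ^ 3 * (a - logb β (N₀ * b)) ^ 3) := by
  have hgap : HasDerivAt (fun y => a - logb β (N₀ * y)) (-(b⁻¹ / log β)) b :=
    (hasDerivAt_logb_const_mul β hN₀ hb).const_sub a
  have hfirst : deriv (fun y => C / (y * (a - logb β (N₀ * y)))) =ᶠ[𝓝 b]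
      fun y => -C * (a - logb β (N₀ * y) - (log β)⁻¹) / (y * (a - logb β (N₀ * y))) ^ 2 := by
    filter_upwards [eventually_ne_nhds hb, hgap.continuousAt.eventually_ne hs] with y hy hsy
    exact (hasDerivAt_div_mul_sub_logb C a β hN₀ hy hsy).deriv
  have h := ((hgap.sub_const (log β)⁻¹).const_mul (-C)).fun_div
    ((hasDerivAt_mul_sub_logb a β hN₀ hb).fun_pow 2) (pow_ne_zero 2 (mul_ne_zero hb hs))
  refine (h.congr_of_eventuallyEq hfirst).deriv.trans ?_
  generalize a - logb β (N₀ * b) = s at hs ⊢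
  field_simp
  ring

theorem deriv_deriv_div_mul_sub_logb_mixed (hN₀ : N₀ ≠ 0) (hb : b ≠ 0) {x : ℝ}
    (hx : x ≠ logb β (N₀ * b)) :
    deriv (fun a => deriv (fun y => C / (y * (a - logb β (N₀ * y)))) b) x =
      C * (x - logb β (N₀ * b) - 2 / log β) / (b ^ 2 * (x - logb β (N₀ * b)) ^ 3) := by
  set L := logb β (N₀ * b)
  have hxL : x - L ≠ 0 := sub_ne_zero.2 hx
  have hfirst : (fun a => deriv (fun y => C / (y * (a - logb β (N₀ * y)))) b) =ᶠ[𝓝 x]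
      fun a => -C * (a - L - (log β)⁻¹) / (b * (a - L)) ^ 2 :=
    (eventually_ne_nhds hx).mono fun a ha =>
      (hasDerivAt_div_mul_sub_logb C a β hN₀ hb (sub_ne_zero.2 ha)).deriv
  have hgap : HasDerivAt (fun a => a - L) 1 x := (hasDerivAt_id' x).sub_const L
  have h := ((hgap.sub_const (log β)⁻¹).const_mul (-C)).fun_div
    ((hgap.const_mul b).fun_pow 2) (pow_ne_zero 2 (mul_ne_zero hb hxL))
  refine (h.congr_of_eventuallyEq hfirst).deriv.trans ?_
  field_simp
  ring

end

/-- Equation (53) of the paper (second half of Lemma 2): for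
`f(A,B) = C / (B·(A − log₂(N₀·B)))` with `s = A − log₂(N₀·B) > 0`, the Hessian
determinant equals `C²·(3s − 2/ln 2) / (B⁴·s⁵)`, the second `A`-derivative equals
`2C/(B·s³) > 0`, and whenever `s ≥ 2/(3·ln 2)` the 2×2 Hessian matrix of `f` is
positive semidefinite. -/
theorem stmt_4 (C N₀ : ℝ) (hC : 0 < C) (hN₀ : 0 < N₀)
    (f : ℝ → ℝ → ℝ)
    (hf : ∀ A B : ℝ, f A B = C / (B * (A - Real.logb 2 (N₀ * B)))) :
    ∀ A B s : ℝ, 0 < B → Real.logb 2 (N₀ * B) < A → s = A - Real.logb 2 (N₀ * B) →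
      ((deriv (deriv (fun a => f a B)) A * deriv (deriv (fun b => f A b)) B -
            (deriv (fun a => deriv (fun b => f a b) B) A) ^ 2 =
          C ^ 2 * (3 * s - 2 / Real.log 2) / (B ^ 4 * s ^ 5)) ∧
        deriv (deriv (fun a => f a B)) A = 2 * C / (B * s ^ 3) ∧
        0 < deriv (deriv (fun a => f a B)) A) ∧
      (2 / (3 * Real.log 2) ≤ s →
        Matrix.PosSemidef
          !![deriv (deriv (fun a => f a B)) A,
             deriv (fun a => deriv (fun b => f a b) B) A;
             deriv (fun a => deriv (fun b => f a b) B) A,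
             deriv (deriv (fun b => f A b)) B]) := by
  intro A B s hB hA hs
  simp only [hf]
  have hs₀ : 0 < s := hs ▸ sub_pos.2 hA
  have h_aa : deriv (deriv fun a => C / (B * (a - logb 2 (N₀ * B)))) A = 2 * C / (B * s ^ 3) :=
    hs ▸ deriv_deriv_div_mul_sub C hB.ne' hA.ne'
  have h_ab : deriv (fun a => deriv (fun b => C / (b * (a - logb 2 (N₀ * b)))) B) A =
      C * (s - 2 / log 2) / (B ^ 2 * s ^ 3) :=
    hs ▸ deriv_deriv_div_mul_sub_logb_mixed C 2 hN₀.ne' hB.ne' hA.ne'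
  have h_bb : deriv (deriv fun b => C / (b * (A - logb 2 (N₀ * b)))) B =
      C * (s / log 2 + 2 * (s - (log 2)⁻¹) ^ 2) / (B ^ 3 * s ^ 3) :=
    hs ▸ deriv_deriv_div_mul_sub_logb C A 2 hN₀.ne' hB.ne' (sub_ne_zero.2 hA.ne')
  rw [h_aa, h_ab, h_bb]
  have hdet : 2 * C / (B * s ^ 3) * (C * (s / log 2 + 2 * (s - (log 2)⁻¹) ^ 2) / (B ^ 3 * s ^ 3)) -
      (C * (s - 2 / log 2) / (B ^ 2 * s ^ 3)) ^ 2 =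
        C ^ 2 * (3 * s - 2 / log 2) / (B ^ 4 * s ^ 5) := by
    field_simp
    ring
  refine ⟨⟨hdet, rfl, by positivity⟩, fun hs_ge => ?_⟩
  have h_gap : 0 ≤ 3 * s - 2 / log 2 := by
    have : 3 * (2 / (3 * log 2)) = 2 / log 2 := by ring
    linarith
  exact Matrix.posSemidef_fin_two_of_pos_of_det_nonneg (by positivity) (hdet ▸ by positivity)
end

section
/- Let C > 0 and N₀ > 0 be real constants and let A ∈ ℝ be fixed. The single-variable function B ↦ C / (B·(A − log₂(N₀·B))) is convex on the set {B ∈ ℝ : 0 < B and log₂(N₀·B) < A}, where log₂ is the base-2 logarithm. (This set is an interval, since log₂(N₀·B) is strictly increasing in B.) -/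
/-!
The denominator `B ↦ B (A - log₂ (N₀ B))` is an affine function plus a positive multiple of
`-B log B`, hence concave, and the domain is exactly where it is positive. The reciprocal of a
positive concave function is convex, since `y ↦ C / y` is convex and antitone on `(0, ∞)`.
-/

open Real Set

theorem ConcaveOn.convexOn_div {E : Type*} [AddCommMonoid E] [Module ℝ E] {s : Set E}
    {f : E → ℝ} (hf : ConcaveOn ℝ s f) (hpos : ∀ x ∈ s, 0 < f x) {c : ℝ} (hc : 0 ≤ c) :
    ConvexOn ℝ s fun x => c / f x := by
  have hdiv : ConvexOn ℝ (Ioi 0) fun y : ℝ => c / y := by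
    simpa [div_eq_mul_inv] using (convexOn_zpow (𝕜 := ℝ) (-1)).smul hc
  refine ⟨hf.1, fun x hx y hy a b ha hb hab => ?_⟩
  have hcombo : a • f x + b • f y ∈ Ioi 0 :=
    convex_Ioi 0 (hpos x hx) (hpos y hy) ha hb hab
  calc c / f (a • x + b • y) ≤ c / (a • f x + b • f y) :=
        div_le_div_of_nonneg_left hc hcombo (hf.2 hx hy ha hb hab)
    _ ≤ a • (c / f x) + b • (c / f y) := hdiv.2 (hpos x hx) (hpos y hy) ha hb hab

theorem concaveOn_mul_sub_logb_mul {b : ℝ} (hb : 1 < b) {N₀ : ℝ} (hN₀ : N₀ ≠ 0) (A : ℝ) :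
    ConcaveOn ℝ (Ici 0) fun x => x * (A - logb b (N₀ * x)) := by
  have hlogb : 0 < log b := log_pos hb
  refine (((LinearMap.mulRight ℝ (A - logb b N₀)).concaveOn (convex_Ici 0)).add
    (concaveOn_negMulLog.smul (inv_nonneg.2 hlogb.le))).congr fun x hx => ?_
  rcases (mem_Ici.1 hx).eq_or_lt with rfl | hx
  · simp
  · simp only [Pi.add_apply, LinearMap.mulRight_apply, negMulLog, smul_eq_mul, logb,
      log_mul hN₀ hx.ne']
    field_simp
    ring

/-- Partial convexity (supporting Lemma 2): for fixed `A`, the function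
`B ↦ C / (B·(A − log₂(N₀·B)))` is convex on `{B : 0 < B ∧ log₂(N₀·B) < A}`. -/
theorem stmt_5 (C N₀ A : ℝ) (hC : 0 < C) (hN₀ : 0 < N₀) :
    ConvexOn ℝ {B : ℝ | 0 < B ∧ Real.logb 2 (N₀ * B) < A}
      (fun B => C / (B * (A - Real.logb 2 (N₀ * B)))) := by
  have hconc := concaveOn_mul_sub_logb_mul one_lt_two hN₀.ne' A
  have hdom : {B : ℝ | 0 < B ∧ logb 2 (N₀ * B) < A}
      = {x ∈ Ici 0 | 0 < x * (A - logb 2 (N₀ * x))} := by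
    ext B
    simp only [mem_ofPred_eq, mem_Ici]
    constructor
    · rintro ⟨hB, hlt⟩
      exact ⟨hB.le, mul_pos hB (sub_pos.2 hlt)⟩
    · rintro ⟨hB, hprod⟩
      have hB' : 0 < B := hB.lt_of_ne (by rintro rfl; simp at hprod)
      exact ⟨hB', sub_pos.1 (pos_of_mul_pos_right hprod hB)⟩
  rw [hdom]
  exact (hconc.subset (sep_subset _ _) (hconc.convex_gt 0)).convexOn_div (fun x hx => hx.2) hC.le
end

section
/- Let K ≥ 1 be a natural number and let g₁, …, g_K, β₁, …, β_K, S, B, N₀, P_max be positive real numbers. For a vector p = (p₁, …, p_K) with 0 < p_j ≤ P_max for all j, define W(p) = ∑_{i=1}^{K} S·β_i / ( B · log₂( (∑_{j=1}^{i} g_j·p_j + N₀·B) / (∑_{j=1}^{i−1} g_j·p_j + N₀·B) ) ), where log₂ is the base-2 logarithm (all the logarithm arguments are strictly greater than 1, so W(p) is well defined and positive). Let p' be the vector obtained from p by replacing its K-th coordinate with P_max. Then W(p') ≤ W(p). -/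
/-- The per-subchannel weighted uplink-delay objective `W(p)` of the MC-NOMA
system (equation (18) of the paper): `g j` are squared channel gains, `β j`
processing speeds, `S` the model size, `B` the bandwidth, `N₀·B` the noise
power. -/
noncomputable def delayObjective (K : ℕ) (g β : ℕ → ℝ) (S B N₀ : ℝ) (p : ℕ → ℝ) : ℝ :=
  ∑ i ∈ Finset.Icc 1 K, S * β i /
    (B * Real.logb 2 (((∑ j ∈ Finset.Icc 1 i, g j * p j) + N₀ * B) /
      ((∑ j ∈ Finset.Icc 1 (i - 1), g j * p j) + N₀ * B)))

/-- Equation (18) of the paper: the weighted uplink-delay objective `W` is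
monotonically non-increasing in the transmit power of the last (strongest-channel)
user, so replacing that user's power by `P_max` does not increase `W`. -/
theorem stmt_12 (K : ℕ) (hK : 1 ≤ K) (g β : ℕ → ℝ) (S B N₀ Pmax : ℝ)
    (hg : ∀ j ∈ Finset.Icc 1 K, 0 < g j) (hβ : ∀ j ∈ Finset.Icc 1 K, 0 < β j)
    (hS : 0 < S) (hB : 0 < B) (hN₀ : 0 < N₀) (hPmax : 0 < Pmax)
    (p : ℕ → ℝ) (hp : ∀ j ∈ Finset.Icc 1 K, 0 < p j ∧ p j ≤ Pmax) :
    delayObjective K g β S B N₀ (Function.update p K Pmax) ≤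
      delayObjective K g β S B N₀ p := by
  obtain ⟨m, rfl⟩ : ∃ m, K = m + 1 := ⟨K - 1, by omega⟩
  unfold delayObjective
  apply Finset.sum_le_sum
  intro i hi
  simp only [Finset.mem_Icc] at hi
  rcases lt_or_eq_of_le hi.2 with hlt | heq
  · -- i < m + 1 : all involved indices are < m+1, so update is invisible
    have h1 : ∀ j ∈ Finset.Icc 1 i, g j * Function.update p (m + 1) Pmax j = g j * p j := by
      intro j hj
      simp only [Finset.mem_Icc] at hj
      rw [Function.update_of_ne (by omega)]
    have h2 : ∀ j ∈ Finset.Icc 1 (i - 1), g j * Function.update p (m + 1) Pmax j = g j * p j := by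
      intro j hj
      simp only [Finset.mem_Icc] at hj
      rw [Function.update_of_ne (by omega)]
    rw [Finset.sum_congr rfl h1, Finset.sum_congr rfl h2]
  · -- i = m + 1
    subst heq
    have hupd : ∀ j ∈ Finset.Icc 1 m, g j * Function.update p (m + 1) Pmax j = g j * p j := by
      intro j hj
      simp only [Finset.mem_Icc] at hj
      rw [Function.update_of_ne (by omega)]
    rw [Finset.sum_Icc_succ_top (by omega : 1 ≤ m + 1),
        Finset.sum_Icc_succ_top (by omega : 1 ≤ m + 1)]
    simp only [Nat.add_sub_cancel, Function.update_self]
    rw [Finset.sum_congr rfl hupd]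
    set Sm := ∑ j ∈ Finset.Icc 1 m, g j * p j with hSm
    have hSmnn : 0 ≤ Sm := Finset.sum_nonneg fun j hj => by
      simp only [Finset.mem_Icc] at hj
      have := hg j (Finset.mem_Icc.mpr ⟨hj.1, by omega⟩)
      have := (hp j (Finset.mem_Icc.mpr ⟨hj.1, by omega⟩)).1
      positivity
    have hD : 0 < Sm + N₀ * B := by positivity
    have hgK : 0 < g (m + 1) := hg _ (Finset.mem_Icc.mpr ⟨by omega, le_refl _⟩)
    obtain ⟨hpK, hpKle⟩ := hp (m + 1) (Finset.mem_Icc.mpr ⟨by omega, le_refl _⟩)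
    have hβK : 0 < β (m + 1) := hβ _ (Finset.mem_Icc.mpr ⟨by omega, le_refl _⟩)
    have hratio1 : 1 < (Sm + g (m + 1) * p (m + 1) + N₀ * B) / (Sm + N₀ * B) := by
      rw [one_lt_div hD]; nlinarith
    have hratio2 : (Sm + g (m + 1) * p (m + 1) + N₀ * B) / (Sm + N₀ * B) ≤
        (Sm + g (m + 1) * Pmax + N₀ * B) / (Sm + N₀ * B) := by
      gcongr
    have hlog1 : 0 < Real.logb 2 ((Sm + g (m + 1) * p (m + 1) + N₀ * B) / (Sm + N₀ * B)) :=
      Real.logb_pos (by norm_num) hratio1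
    have hlog2 : Real.logb 2 ((Sm + g (m + 1) * p (m + 1) + N₀ * B) / (Sm + N₀ * B)) ≤
        Real.logb 2 ((Sm + g (m + 1) * Pmax + N₀ * B) / (Sm + N₀ * B)) := by
      gcongr
      norm_num
    apply div_le_div_of_nonneg_left (by positivity) (by positivity)
    exact mul_le_mul_of_nonneg_left hlog2 hB.le
end
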